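/- arXiv:1607.07563 — 3 statements merged into one kernel-verified Lean document; each statement's English description precedes it below -/
import Mathlib

section
/- Let g(p₁,p₂,p₃) = p₁p₂p₃ + p₁p₂(1−p₃) + p₂p₃(1−p₁) + p₃p₁(1−p₂) and define h(p₁,p₂,p₃) = g(p₁,p₂,p₃) − (p₁+p₂+p₃)/3. If 1/2 ≤ pᵢ ≤ 1 for i = 1,2,3, then h(p₁,p₂,p₃) ≥ 0. -/
/-- The majority-vote probability for three independent Bernoulli votes
with success probabilities `p₁, p₂, p₃`. -/
noncomputable def g3 (p₁ p₂ p₃ : ℝ) : ℝ :=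
  p₁ * p₂ * p₃ + p₁ * p₂ * (1 - p₃) + p₂ * p₃ * (1 - p₁) + p₃ * p₁ * (1 - p₂)

/-- `h(p₁,p₂,p₃) = g(p₁,p₂,p₃) − (p₁+p₂+p₃)/3`. -/
noncomputable def h3 (p₁ p₂ p₃ : ℝ) : ℝ := g3 p₁ p₂ p₃ - (p₁ + p₂ + p₃) / 3

theorem h3_nonneg (p₁ p₂ p₃ : ℝ)
    (h₁ : 1 / 2 ≤ p₁ ∧ p₁ ≤ 1) (h₂ : 1 / 2 ≤ p₂ ∧ p₂ ≤ 1) (h₃ : 1 / 2 ≤ p₃ ∧ p₃ ≤ 1) :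
    0 ≤ h3 p₁ p₂ p₃ := by
  obtain ⟨a1, b1⟩ := h₁
  obtain ⟨a2, b2⟩ := h₂
  obtain ⟨a3, b3⟩ := h₃
  unfold h3 g3
  nlinarith [mul_nonneg (sub_nonneg.2 a1) (sub_nonneg.2 a2), mul_nonneg (sub_nonneg.2 a2) (sub_nonneg.2 a3), mul_nonneg (sub_nonneg.2 a1) (sub_nonneg.2 a3), mul_nonneg (sub_nonneg.2 b1) (sub_nonneg.2 b2), mul_nonneg (sub_nonneg.2 b2) (sub_nonneg.2 b3), mul_nonneg (sub_nonneg.2 b1) (sub_nonneg.2 b3), mul_nonneg (mul_nonneg (sub_nonneg.2 a1) (sub_nonneg.2 a2)) (sub_nonneg.2 a3), mul_nonneg (mul_nonneg (sub_nonneg.2 a1) (sub_nonneg.2 a2)) (sub_nonneg.2 b3), mul_nonneg (mul_nonneg (sub_nonneg.2 a1) (sub_nonneg.2 b2)) (sub_nonneg.2 a3), mul_nonneg (mul_nonneg (sub_nonneg.2 b1) (sub_nonneg.2 a2)) (sub_nonneg.2 a3)]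
end

section
/- If 1/2 ≤ pᵢ ≤ 1 for i = 1,2,3, then g(p₁,p₂,p₃) ≥ min(p₁,p₂,p₃). -/
theorem g3_ge_min (p₁ p₂ p₃ : ℝ)
    (h₁ : 1 / 2 ≤ p₁ ∧ p₁ ≤ 1) (h₂ : 1 / 2 ≤ p₂ ∧ p₂ ≤ 1) (h₃ : 1 / 2 ≤ p₃ ∧ p₃ ≤ 1) :
    min p₁ (min p₂ p₃) ≤ g3 p₁ p₂ p₃ := by
  obtain ⟨a1, b1⟩ := h₁
  obtain ⟨a2, b2⟩ := h₂
  obtain ⟨a3, b3⟩ := h₃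
  unfold g3
  rcases le_total p₁ (min p₂ p₃) with h | h <;>
    [rw [min_eq_left h]; rw [min_eq_right h]] <;>
  simp only [le_min_iff, min_le_iff] at h <;>
  [skip; rcases le_total p₂ p₃ with h' | h'] <;>
  [skip; rw [min_eq_left h']; rw [min_eq_right h']] <;>
  nlinarith [mul_nonneg (sub_nonneg.2 b1) (sub_nonneg.2 b2),
    mul_nonneg (sub_nonneg.2 b2) (sub_nonneg.2 b3),
    mul_nonneg (sub_nonneg.2 b1) (sub_nonneg.2 b3),
    mul_nonneg (sub_nonneg.2 a1) (sub_nonneg.2 a2),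
    mul_nonneg (sub_nonneg.2 a2) (sub_nonneg.2 a3),
    mul_nonneg (sub_nonneg.2 a1) (sub_nonneg.2 a3)]
end

section
/- Let 𝒰 = ⋃_{m≥0} {1,2,3}^m and let (E_v)_{v ∈ 𝒰} be i.i.d. random variables with the exponential distribution of rate 1. For ε > 0 and n ∈ ℕ, say that the ternary branching structure with i.i.d. Exp(ε^{−2}) lifetimes contains the full regular ternary tree of depth n by time t if for every v ∈ {1,2,3}^n, ε² · Σ_{u a proper prefix of v (including the empty word)} E_u ≤ t. Then for every k ∈ ℕ and every A > 0 there exist a(k,A) > 0 and ε₁(k,A) ∈ (0, e^{−1}) such that for all ε ∈ (0, ε₁) and all t ≥ a ε² |log ε|, the probability that the structure contains the full regular ternary tree of depth ⌈A |log ε|⌉ by time t is at least 1 − ε^k. -/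
/-!
Every depth-`n` vertex `v` has birth time `ε² S_v`, where `S_v` is a sum of `n` independent
`Exp(1)` variables (the lifetimes along the path to `v`). The Chernoff bound at `θ = 1/2`, where
the `Exp(1)` moment generating function equals `2`, gives `P(S_v ≥ s) ≤ 2ⁿ e^{-s/2}`, so a union
bound over the `3ⁿ` vertices gives failure probability at most `6ⁿ e^{-t/(2ε²)}`. With
`n = ⌈A |log ε|⌉ ≤ (A + 1) |log ε|` and `t ≥ 2((A + 1) log 6 + k) ε² |log ε|` this is at most `ε^k`.
-/

open MeasureTheory ProbabilityTheory

/-- For `v ∈ {1,2,3}ⁿ` (encoded as a list over `Fin 3` of length `n`) and a family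
`E` of exponential lifetimes indexed by Ulam–Harris labels, the birth time of
individual `v` in a ternary branching process with `Exp(ε⁻²)` lifetimes is
`ε² Σ_{u proper prefix of v} E_u`; the structure contains the full regular ternary tree
of depth `n` by time `t` if every such birth time is at most `t`. -/
def containsRegularTree {Ω : Type*} (E : List (Fin 3) → Ω → ℝ) (ε t : ℝ) (n : ℕ)
    (ω : Ω) : Prop :=
  ∀ v : List (Fin 3), v.length = n →
    ε ^ 2 * ∑ j ∈ Finset.range n, E (v.take j) ω ≤ t

open Real

section ExponentialMGF

variable {r θ : ℝ}

lemma exponentialPDF_mul_exp_mul (hr : 0 ≤ r) (hθ : θ < r) (x : ℝ) :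
    exponentialPDF r x * ENNReal.ofReal (exp (θ * x))
      = ENNReal.ofReal (r / (r - θ)) * exponentialPDF (r - θ) x := by
  have hrθ : 0 < r - θ := sub_pos.mpr hθ
  rw [exponentialPDF_eq, exponentialPDF_eq]
  split_ifs
  · rw [← ENNReal.ofReal_mul (by positivity), ← ENNReal.ofReal_mul (by positivity)]
    congr 1
    rw [mul_assoc, ← exp_add, ← mul_assoc, div_mul_cancel₀ r hrθ.ne']
    ring_nf
  · simp

lemma lintegral_exp_mul_expMeasure (hr : 0 ≤ r) (hθ : θ < r) :
    ∫⁻ x, ENNReal.ofReal (exp (θ * x)) ∂expMeasure r = ENNReal.ofReal (r / (r - θ)) := by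
  have hpdf : Measurable (gammaPDF 1 r) := (measurable_gammaPDFReal 1 r).ennreal_ofReal
  rw [expMeasure, gammaMeasure, lintegral_withDensity_eq_lintegral_mul _ hpdf (by fun_prop)]
  change ∫⁻ x, exponentialPDF r x * ENNReal.ofReal (exp (θ * x)) = _
  simp_rw [exponentialPDF_mul_exp_mul hr hθ]
  have hpdf' : Measurable (exponentialPDF (r - θ)) :=
    (measurable_exponentialPDFReal _).ennreal_ofReal
  rw [lintegral_const_mul _ hpdf',
    lintegral_exponentialPDF_eq_one (sub_pos.mpr hθ), mul_one]

lemma integrable_exp_mul_expMeasure (hr : 0 ≤ r) (hθ : θ < r) :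
    Integrable (fun x => exp (θ * x)) (expMeasure r) := by
  rw [← lintegral_ofReal_ne_top_iff_integrable (by fun_prop)
    (.of_forall fun x => (exp_pos _).le), lintegral_exp_mul_expMeasure hr hθ]
  exact ENNReal.ofReal_ne_top

lemma mgf_id_expMeasure (hr : 0 ≤ r) (hθ : θ < r) :
    mgf id (expMeasure r) θ = r / (r - θ) := by
  rw [mgf, integral_eq_lintegral_of_nonneg_ae (.of_forall fun x => (exp_pos _).le)
    (by fun_prop)]
  simp only [id, lintegral_exp_mul_expMeasure hr hθ]
  exact ENNReal.toReal_ofReal (div_nonneg hr (sub_pos.mpr hθ).le)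

end ExponentialMGF

lemma ProbabilityTheory.iIndepFun.measureReal_sum_ge_le_of_map_eq_expMeasure
    {Ω ι : Type*} [MeasurableSpace Ω] {μ : Measure Ω} {X : ι → Ω → ℝ} {r θ : ℝ}
    (hindep : iIndepFun X μ) (hmeas : ∀ i, Measurable (X i))
    (hdist : ∀ i, μ.map (X i) = expMeasure r) (hr : 0 ≤ r) (hθ₀ : 0 ≤ θ) (hθ : θ < r)
    (s : Finset ι) (c : ℝ) :
    μ.real {ω | c ≤ ∑ i ∈ s, X i ω} ≤ exp (-θ * c) * (r / (r - θ)) ^ s.card := by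
  have := hindep.isProbabilityMeasure
  have hint : ∀ i, Integrable (fun ω => exp (θ * X i ω)) μ := fun i =>
    (integrable_map_measure (g := fun x => exp (θ * x)) (by fun_prop)
      (hmeas i).aemeasurable).mp
      (hdist i ▸ integrable_exp_mul_expMeasure hr hθ)
  have hmgf : ∀ i, mgf (X i) μ θ = r / (r - θ) := fun i => by
    rw [← mgf_id_map (hmeas i).aemeasurable, hdist i, mgf_id_expMeasure hr hθ]
  have hchernoff := measure_ge_le_exp_mul_mgf c hθ₀
    (hindep.integrable_exp_mul_sum hmeas (s := s) fun i _ => hint i)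
  simpa only [hindep.mgf_sum hmeas, hmgf, Finset.prod_const, Finset.sum_apply] using hchernoff

lemma List.injOn_take {α : Type*} (v : List α) :
    Set.InjOn (fun j => v.take j) (Set.Iic v.length) := by
  intro i hi j hj hij
  simpa [List.length_take, min_eq_left (Set.mem_Iic.mp hi), min_eq_left (Set.mem_Iic.mp hj)]
    using congrArg List.length hij

section RegularTree

variable {Ω : Type*} [MeasureSpace Ω] {E : List (Fin 3) → Ω → ℝ}

lemma measureReal_sum_take_ge_le (hmeas : ∀ v, Measurable (E v)) (hindep : iIndepFun E ℙ)
    (hdist : ∀ v, Measure.map (E v) ℙ = expMeasure 1) (v : List (Fin 3)) (c : ℝ) :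
    (ℙ : Measure Ω).real {ω | c ≤ ∑ j ∈ Finset.range v.length, E (v.take j) ω}
      ≤ exp (-(c / 2)) * 2 ^ v.length := by
  have hinj : Set.InjOn (fun j => v.take j) (Finset.range v.length) :=
    v.injOn_take.mono fun j hj => Set.mem_Iic.mpr (Finset.mem_range.mp hj).le
  have hchernoff := hindep.measureReal_sum_ge_le_of_map_eq_expMeasure hmeas hdist zero_le_one
    (by norm_num : (0 : ℝ) ≤ 1 / 2) (by norm_num) ((Finset.range v.length).image v.take) c
  rw [Finset.card_image_of_injOn hinj, Finset.card_range] at hchernoff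
  rw [show (1 : ℝ) / (1 - 1 / 2) = 2 by norm_num, show -(1 / 2 : ℝ) * c = -(c / 2) by ring]
    at hchernoff
  simpa only [Finset.sum_image hinj] using hchernoff

lemma measureReal_not_containsRegularTree_le (hmeas : ∀ v, Measurable (E v))
    (hindep : iIndepFun E ℙ) (hdist : ∀ v, Measure.map (E v) ℙ = expMeasure 1)
    {ε : ℝ} (hε : ε ≠ 0) (t : ℝ) (n : ℕ) :
    (ℙ : Measure Ω).real {ω | ¬ containsRegularTree E ε t n ω}
      ≤ 6 ^ n * exp (-(t / (2 * ε ^ 2))) := by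
  have := hindep.isProbabilityMeasure
  have hsub : {ω | ¬ containsRegularTree E ε t n ω} ⊆ ⋃ v : List.Vector (Fin 3) n,
      {ω | t / ε ^ 2 ≤ ∑ j ∈ Finset.range v.toList.length, E (v.toList.take j) ω} := by
    intro ω hω
    simp only [containsRegularTree, Set.mem_ofPred_eq, not_forall, not_le] at hω
    obtain ⟨v, hv, hlt⟩ := hω
    refine Set.mem_iUnion.mpr ⟨⟨v, hv⟩, ?_⟩
    rw [Set.mem_ofPred_eq, List.Vector.toList_mk, hv, div_le_iff₀' (by positivity)]
    exact hlt.le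
  calc (ℙ : Measure Ω).real {ω | ¬ containsRegularTree E ε t n ω}
      ≤ ∑ v : List.Vector (Fin 3) n, (ℙ : Measure Ω).real
          {ω | t / ε ^ 2 ≤ ∑ j ∈ Finset.range v.toList.length, E (v.toList.take j) ω} :=
        (measureReal_mono hsub).trans (measureReal_iUnion_fintype_le _)
    _ ≤ ∑ v : List.Vector (Fin 3) n, exp (-(t / ε ^ 2 / 2)) * 2 ^ n := by
        gcongr with v
        simpa using measureReal_sum_take_ge_le hmeas hindep hdist v.toList (t / ε ^ 2)
    _ = 6 ^ n * exp (-(t / (2 * ε ^ 2))) := by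
        rw [Finset.sum_const, Finset.card_univ, card_vector, Fintype.card_fin, nsmul_eq_mul,
          div_div, mul_comm (ε ^ 2), show (6 : ℝ) ^ n = 3 ^ n * 2 ^ n by rw [← mul_pow]; norm_num]
        push_cast
        ring

end RegularTree

lemma one_sub_le_probReal_of_compl_le {Ω : Type*} [MeasurableSpace Ω] {μ : Measure Ω}
    [IsProbabilityMeasure μ] {s : Set Ω} {p : ℝ} (h : μ.real sᶜ ≤ p) : 1 - p ≤ μ.real s := by
  have hsplit := measureReal_union_le (μ := μ) s sᶜ
  rw [Set.union_compl_self, probReal_univ] at hsplit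
  linarith

lemma six_pow_ceil_mul_exp_le {A L : ℝ} (k : ℕ) (hA : 0 ≤ A) (hL : 1 ≤ L) :
    (6 : ℝ) ^ ⌈A * L⌉₊ * exp (-(((A + 1) * log 6 + k) * L)) ≤ exp (-(k * L)) := by
  have hlog6 : 0 < log 6 := log_pos (by norm_num)
  have hceil : (⌈A * L⌉₊ : ℝ) ≤ (A + 1) * L := by
    nlinarith [Nat.ceil_lt_add_one (mul_nonneg hA (zero_le_one.trans hL))]
  rw [← exp_log (by norm_num : (0 : ℝ) < 6 ^ ⌈A * L⌉₊), log_pow, ← exp_add, exp_le_exp]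
  nlinarith

theorem regular_tree_whp_general {Ω : Type*} [MeasureSpace Ω]
    (E : List (Fin 3) → Ω → ℝ)
    (hmeas : ∀ v, Measurable (E v))
    (hindep : iIndepFun E ℙ)
    (hdist : ∀ v, Measure.map (E v) ℙ = expMeasure 1)
    (k : ℕ) (A : ℝ) (hA : 0 < A) :
    ∃ a > (0 : ℝ), ∃ ε₁ : ℝ, 0 < ε₁ ∧ ε₁ < Real.exp (-1) ∧
      ∀ ε ∈ Set.Ioo (0 : ℝ) ε₁, ∀ t : ℝ, a * ε ^ 2 * |Real.log ε| ≤ t →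
        1 - ε ^ k
          ≤ (ℙ {ω | containsRegularTree E ε t ⌈A * |Real.log ε|⌉₊ ω}).toReal := by
  have := hindep.isProbabilityMeasure
  refine ⟨2 * ((A + 1) * log 6 + k), by positivity, exp (-1) / 2, by positivity,
    half_lt_self (exp_pos _), ?_⟩
  rintro ε ⟨hε₀, hε₁⟩ t ht
  set L := |log ε|
  have hlogε : log ε < -1 := (log_lt_iff_lt_exp hε₀).mpr (hε₁.trans (half_lt_self (exp_pos _)))
  have hL : L = -log ε := abs_of_neg (by linarith)
  have hεk : ε ^ k = exp (-(k * L)) := by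
    rw [hL, mul_neg, neg_neg, exp_nat_mul, exp_log hε₀]
  have hexp : exp (-(t / (2 * ε ^ 2))) ≤ exp (-(((A + 1) * log 6 + k) * L)) := by
    rw [exp_le_exp, neg_le_neg_iff, le_div_iff₀ (by positivity)]
    linarith
  refine one_sub_le_probReal_of_compl_le ?_
  calc (ℙ : Measure Ω).real {ω | ¬ containsRegularTree E ε t ⌈A * L⌉₊ ω}
      ≤ 6 ^ ⌈A * L⌉₊ * exp (-(t / (2 * ε ^ 2))) :=
        measureReal_not_containsRegularTree_le hmeas hindep hdist hε₀.ne' t _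
    _ ≤ 6 ^ ⌈A * L⌉₊ * exp (-(((A + 1) * log 6 + k) * L)) := by gcongr
    _ ≤ ε ^ k := hεk ▸ six_pow_ceil_mul_exp_le k hA.le (by linarith)

theorem regular_tree_whp {Ω : Type*} [MeasureSpace Ω]
    [IsProbabilityMeasure (ℙ : Measure Ω)]
    (E : List (Fin 3) → Ω → ℝ)
    (hmeas : ∀ v, Measurable (E v))
    (hindep : iIndepFun E ℙ)
    (hdist : ∀ v, Measure.map (E v) ℙ = expMeasure 1)
    (k : ℕ) (A : ℝ) (hA : 0 < A) :
    ∃ a > (0 : ℝ), ∃ ε₁ : ℝ, 0 < ε₁ ∧ ε₁ < Real.exp (-1) ∧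
      ∀ ε ∈ Set.Ioo (0 : ℝ) ε₁, ∀ t : ℝ, a * ε ^ 2 * |Real.log ε| ≤ t →
        1 - ε ^ k
          ≤ (ℙ {ω | containsRegularTree E ε t ⌈A * |Real.log ε|⌉₊ ω}).toReal :=
  regular_tree_whp_general E hmeas hindep hdist k A hA
end
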